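/- Let I be an input with pairwise distinct elements and buffer size M. Let r_1 be the maximal increasing run and r_2 the maximal decreasing run from the initial state (the first M elements of I in the buffer, the rest remaining). Then |r_1| < 3M or |r_2| < 3M. -/

import Mathlib

namespace RunGen

variable {α : Type*} [LinearOrder α]

/-- A run: a contiguous monotone (nondecreasing or nonincreasing) block. -/
def IsRun (l : List α) : Prop := l.Chain' (· ≤ ·) ∨ l.Chain' (· ≥ ·)

/-- `S` can be partitioned into `n` contiguous runs. -/
def RunsInto (S : List α) (n : ℕ) : Prop :=
  ∃ P : List (List α), P.flatten = S ∧ P.length = n ∧ ∀ r ∈ P, IsRun r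

/-- `R S` is the minimum number of contiguous runs into which `S` can be partitioned. -/
noncomputable def R (S : List α) : ℕ := sInf {n | RunsInto S n}

/-- `S` is an `M`-feasible output of the input `I`: `S` is a rearrangement of `I` in which
the element written at (0-indexed) step `t` lies among the first `M + t` input elements
(a size-`M` buffer refilled after each write). -/
def IsFeasibleOutput (M : ℕ) (I S : List α) : Prop :=
  S.length = I.length ∧
    ∃ σ : Fin I.length ≃ Fin I.length,
      ∀ t : Fin I.length, S[(t : ℕ)]? = I[(σ t : ℕ)]? ∧ (σ t : ℕ) < M + (t : ℕ)

/-- `OPT M I` is the minimum of `R S` over all `M`-feasible outputs `S` of `I`. -/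
noncomputable def OPT (M : ℕ) (I : List α) : ℕ :=
  sInf {n | ∃ S : List α, IsFeasibleOutput M I S ∧ RunsInto S n}

/-- The smallest buffered element that can continue an increasing run whose last written
element is `last?` (`none` at the start of a run, where the smallest element is chosen). -/
def nextUp (last? : Option α) (B : List α) : Option α :=
  match last? with
  | none => B.min?
  | some l => (B.filter fun x => decide (l ≤ x)).min?

/-- The largest buffered element that can continue a decreasing run. -/
def nextDown (last? : Option α) (B : List α) : Option α :=
  match last? with
  | none => B.max?
  | some l => (B.filter fun x => decide (x ≤ l)).max?

/-- Writing the maximal increasing run from buffer `B` (in arrival order) and remaining input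
`J` (`fuel` bounds the number of steps; `B.length + J.length` always suffices).  After each
write the next input element, if any, is ingested.  Returns
`(run written, final buffer in arrival order, final remaining input)`. -/
def incAux : ℕ → Option α → List α → List α → List α × List α × List α
  | 0, _, B, J => ([], B, J)
  | fuel + 1, last?, B, J =>
    match nextUp last? B with
    | none => ([], B, J)
    | some x =>
      let res := incAux fuel (some x) (B.erase x ++ J.take 1) (J.drop 1)
      (x :: res.1, res.2.1, res.2.2)

/-- Writing the maximal decreasing run; see `incAux`. -/
def decAux : ℕ → Option α → List α → List α → List α × List α × List α
  | 0, _, B, J => ([], B, J)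
  | fuel + 1, last?, B, J =>
    match nextDown last? B with
    | none => ([], B, J)
    | some x =>
      let res := decAux fuel (some x) (B.erase x ++ J.take 1) (J.drop 1)
      (x :: res.1, res.2.1, res.2.2)

/-- The maximal increasing run from the state `(B, J)`. -/
def maxIncRun (B J : List α) : List α := (incAux (B.length + J.length) none B J).1

/-- The state (buffer in arrival order, remaining input) after writing the maximal
increasing run from `(B, J)`. -/
def incState (B J : List α) : List α × List α := (incAux (B.length + J.length) none B J).2

/-- The maximal decreasing run from the state `(B, J)`. -/
def maxDecRun (B J : List α) : List α := (decAux (B.length + J.length) none B J).1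

/-- The state after writing the maximal decreasing run from `(B, J)`. -/
def decState (B J : List α) : List α × List α := (decAux (B.length + J.length) none B J).2

/-- The maximal run in direction `d` (`true` = increasing, `false` = decreasing). -/
def dirRun (d : Bool) (B J : List α) : List α := if d then maxIncRun B J else maxDecRun B J

/-- The state after writing the maximal run in direction `d`. -/
def dirState (d : Bool) (B J : List α) : List α × List α :=
  if d then incState B J else decState B J

/-- `Writes B J S B' J'`: from the state with buffer `B` (in arrival order) and remaining
input `J`, an algorithm can write exactly the sequence `S` (each written element is removed
from the buffer, and the next input element, if any, is then ingested), ending at the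
state `(B', J')`. -/
inductive Writes : List α → List α → List α → List α → List α → Prop
  | nil (B J : List α) : Writes B J [] B J
  | step (B J : List α) (i : ℕ) (S B' J' : List α) (h : i < B.length)
      (hrest : Writes (B.eraseIdx i ++ J.take 1) (J.drop 1) S B' J') :
      Writes B J (B[i]'h :: S) B' J'

/-- `ProperWrites B J P B' J'`: from state `(B, J)`, a proper algorithm (one that always
writes maximal runs) can write the list of runs `P`, ending at state `(B', J')`. -/
inductive ProperWrites : List α → List α → List (List α) → List α → List α → Prop
  | nil (B J : List α) : ProperWrites B J [] B J
  | step (d : Bool) (B J : List α) (P : List (List α)) (B' J' : List α) (hB : B ≠ [])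
      (h : ProperWrites (dirState d B J).1 (dirState d B J).2 P B' J') :
      ProperWrites B J (dirRun d B J :: P) B' J'

/-- An increasing run writable from the state `(B, J)`, the last written element being
`last?`: each written element is currently buffered and is `≥` the previously written
element, and after each write the next input element (if any) is ingested. -/
inductive IncRunFrom : Option α → List α → List α → List α → Prop
  | nil (last? : Option α) (B J : List α) : IncRunFrom last? B J []
  | cons (last? : Option α) (B J : List α) (x : α) (r : List α) (hx : x ∈ B)
      (hle : ∀ l ∈ last?, l ≤ x)
      (h : IncRunFrom (some x) (B.erase x ++ J.take 1) (J.drop 1) r) :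
      IncRunFrom last? B J (x :: r)

/-- A decreasing run writable from the state `(B, J)`; see `IncRunFrom`. -/
inductive DecRunFrom : Option α → List α → List α → List α → Prop
  | nil (last? : Option α) (B J : List α) : DecRunFrom last? B J []
  | cons (last? : Option α) (B J : List α) (x : α) (r : List α) (hx : x ∈ B)
      (hge : ∀ l ∈ last?, x ≤ l)
      (h : DecRunFrom (some x) (B.erase x ++ J.take 1) (J.drop 1) r) :
      DecRunFrom last? B J (x :: r)

/-- The optimal number of runs over all ways of writing out everything from state `(B, J)`. -/
noncomputable def OPTFrom (B J : List α) : ℕ :=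
  sInf {n | ∃ S : List α, Writes B J S [] [] ∧ RunsInto S n}

/-- Running a deterministic online algorithm `A`: at each step, given the current buffer
(in arrival order) and the output written so far, `A` chooses (the index of) the buffered
element to write next; the next input element is then ingested. -/
def runAlg (A : List α → List α → ℕ) : ℕ → List α → List α → List α → List α
  | 0, _, _, _ => []
  | fuel + 1, W, B, J =>
    match B with
    | [] => []
    | b :: Bt =>
      let i := A (b :: Bt) W % (b :: Bt).length
      let x := (b :: Bt).getD i b
      x :: runAlg A fuel (W ++ [x]) ((b :: Bt).eraseIdx i ++ J.take 1) (J.drop 1)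

/-- The output of the deterministic online algorithm `A` run with buffer size `M` on
input `I`. -/
def onlineOutput (A : List α → List α → ℕ) (M : ℕ) (I : List α) : List α :=
  runAlg A I.length [] (I.take M) (I.drop M)

/-- Running a deterministic algorithm with `v`-lookahead: its choice of which buffered
element to write may additionally depend on the next `v` not-yet-read input elements. -/
def runAlgVis (A : List α → List α → List α → ℕ) (v : ℕ) :
    ℕ → List α → List α → List α → List α
  | 0, _, _, _ => []
  | fuel + 1, W, B, J =>
    match B with
    | [] => []
    | b :: Bt =>
      let i := A (b :: Bt) W (J.take v) % (b :: Bt).length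
      let x := (b :: Bt).getD i b
      x :: runAlgVis A v fuel (W ++ [x]) ((b :: Bt).eraseIdx i ++ J.take 1) (J.drop 1)

/-- The output of the deterministic algorithm `A` with buffer size `M` and `v`-lookahead. -/
def visOutput (A : List α → List α → List α → ℕ) (v M : ℕ) (I : List α) : List α :=
  runAlgVis A v I.length [] (I.take M) (I.drop M)

/-- Alternating up-down replacement selection from a state (starting with an increasing
run when `d = true`), writing maximal runs of strictly alternating directions. -/
def altAux : ℕ → Bool → List α → List α → List α
  | 0, _, _, _ => []
  | fuel + 1, d, B, J =>
    if B = [] then []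
    else dirRun d B J ++ altAux fuel (!d) (dirState d B J).1 (dirState d B J).2

/-- The output of alternating up-down replacement selection with buffer size `M` on `I`. -/
def altOutput (M : ℕ) (I : List α) : List α :=
  altAux (I.length + 1) true (I.take M) (I.drop M)

/-- `GreedyRuns B J P`: `P` is the list of runs written by (some tie-breaking of) the
greedy algorithm from state `(B, J)`: at each decision point it writes the longer of the
two possible maximal runs (ties broken arbitrarily). -/
inductive GreedyRuns : List α → List α → List (List α) → Prop
  | nil : GreedyRuns [] [] []
  | step (d : Bool) (B J : List α) (P : List (List α)) (hB : B ≠ [])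
      (hlen : (dirRun (!d) B J).length ≤ (dirRun d B J).length)
      (h : GreedyRuns (dirState d B J).1 (dirState d B J).2 P) :
      GreedyRuns B J (dirRun d B J :: P)

/-- `PTASOut k B J S`: `S` is a possible output of the phase-based offline approximation
algorithm with parameter `k` from state `(B, J)`: while more than `k` runs remain, it
selects a sequence of `k` consecutive maximal runs writing the longest total number of
elements and writes them, followed by one additional maximal run; once everything can be
written in at most `k` (maximal) runs, it finishes using the fewest possible runs. -/
inductive PTASOut (k : ℕ) : List α → List α → List α → Prop
  | final (B J : List α) (P : List (List α)) (hP : ProperWrites B J P [] [])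
      (hk : P.length ≤ k)
      (hmin : ∀ Q : List (List α), ProperWrites B J Q [] [] → P.length ≤ Q.length) :
      PTASOut k B J P.flatten
  | phase (B J : List α) (P : List (List α)) (B' J' : List α) (r : List α)
      (B'' J'' : List α) (S : List α)
      (hnf : ¬∃ Q : List (List α), ProperWrites B J Q [] [] ∧ Q.length ≤ k)
      (hP : ProperWrites B J P B' J') (hPk : P.length = k)
      (hmax : ∀ (Q : List (List α)) (BQ JQ : List α),
        ProperWrites B J Q BQ JQ → Q.length = k → Q.flatten.length ≤ P.flatten.length)
      (hr : ProperWrites B' J' [r] B'' J'') (hS : PTASOut k B'' J'' S) :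
      PTASOut k B J (P.flatten ++ (r ++ S))

/-- An input is `c`-nearly-sorted (for buffer size `M`) if some proper optimal output
consists entirely of runs of length at least `c * M`. -/
def NearlySorted (c M : ℕ) (I : List α) : Prop :=
  ∃ P : List (List α), ProperWrites (I.take M) (I.drop M) P [] [] ∧
    R P.flatten = OPT M I ∧ ∀ r ∈ P, c * M ≤ r.length

end RunGen

/-!
Let `r` and `d` be the two runs and `K` the buffer together with the next `M` input elements,
so `|K| ≤ 2M`. Since the buffer holds at most `M` elements, the first `t + 1` elements of either
run are among the first `M + t` input elements. For `t = M` both prefixes of length `M + 1` lie in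
`K`, so they share at least two elements; as every element of the first is `≤ r[M]` and every
element of the second is `≥ d[M]`, this forces `d[M] < r[M]`. An element outside `K` is written
after position `M` by both runs, at positions `t` and `t'` say, and `r[M] < r[t] = d[t'] < d[M]`
is impossible: every element common to `r` and `d` lies in `K`. But if both runs had length `3M`,
their prefixes of length `3M` would lie among the first `4M - 1` input elements and hence share
at least `2M + 1 > |K|` elements.
-/

theorem Finset.card_add_card_le_card_add_card_inter {α : Type*} [DecidableEq α]
    {s t u : Finset α} (hs : s ⊆ u) (ht : t ⊆ u) :
    s.card + t.card ≤ u.card + (s ∩ t).card := by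
  rw [← Finset.card_union_add_card_inter]
  exact Nat.add_le_add_right (Finset.card_le_card (Finset.union_subset hs ht)) _

theorem List.toFinset_subset_toFinset {α : Type*} [DecidableEq α] {l l' : List α}
    (h : l ⊆ l') : l.toFinset ⊆ l'.toFinset :=
  fun _ hx => List.mem_toFinset.mpr (h (List.mem_toFinset.mp hx))

theorem List.card_toFinset_take {α : Type*} [DecidableEq α] {l : List α} (hl : l.Nodup)
    {n : ℕ} (hn : n ≤ l.length) : (l.take n).toFinset.card = n := by
  rw [List.toFinset_card_of_nodup (hl.sublist (List.take_sublist _ _)), List.length_take]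
  omega

theorem List.le_getElem_of_mem_take {α : Type*} [Preorder α] {l : List α} {n : ℕ} {x : α}
    (hl : l.Pairwise (· < ·)) (hx : x ∈ l.take (n + 1)) (hn : n < l.length) : x ≤ l[n] := by
  obtain ⟨i, hi, rfl⟩ := List.mem_take_iff_getElem.mp hx
  rcases Nat.lt_or_ge i n with h | h
  · exact (List.pairwise_iff_getElem.mp hl _ _ _ hn h).le
  · obtain rfl : i = n := by omega
    exact le_rfl

namespace RunGen

theorem card_toFinset_append_take_le {α : Type*} [DecidableEq α] {B : List α} {M : ℕ}
    (hB : B.length ≤ M) (J : List α) (k : ℕ) : (B ++ J.take k).toFinset.card ≤ M + k := by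
  refine (List.toFinset_card_le _).trans ?_
  rw [List.length_append]
  exact Nat.add_le_add hB (List.length_take_le _ _)

theorem lt_of_getElem_notMem {α : Type*} {B J r : List α} {t M : ℕ}
    (hrB : r.take (t + 1) ⊆ B ++ J.take t) (ht : t < r.length) (hM : r[t] ∉ B ++ J.take M) :
    M < t := by
  by_contra! htM
  have hsub : B ++ J.take t ⊆ B ++ J.take M := List.append_subset.mpr
    ⟨List.subset_append_left _ _,
      List.subset_append_of_subset_right _ (List.take_subset_take_left J htM)⟩
  exact hM (hsub (hrB (List.mem_take_iff_getElem.mpr ⟨t, by omega, rfl⟩)))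

variable {α : Type*} [LinearOrder α]

theorem mem_of_nextUp_eq_some {l? : Option α} {B : List α} {x : α}
    (h : nextUp l? B = some x) : x ∈ B := by
  cases l? with
  | none => exact List.min?_mem h
  | some l => exact (List.mem_filter.mp (List.min?_mem h)).1

theorem le_of_nextUp_eq_some {l x : α} {B : List α} (h : nextUp (some l) B = some x) :
    l ≤ x :=
  of_decide_eq_true (List.mem_filter.mp (List.min?_mem h)).2

theorem isChain_incAux (n : ℕ) (l? : Option α) (B J : List α) :
    (l?.toList ++ (incAux n l? B J).1).IsChain (· ≤ ·) := by
  induction n generalizing l? B J with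
  | zero => cases l? <;> simp [incAux]
  | succ n ih =>
    cases h : nextUp l? B with
    | none => cases l? <;> simp [incAux, h]
    | some x =>
      simp only [incAux, h]
      cases l? with
      | none => exact ih (some x) _ _
      | some l => exact (ih (some x) _ _).cons_cons (le_of_nextUp_eq_some h)

theorem take_incAux_subperm (n : ℕ) (l? : Option α) (B J : List α) (t : ℕ) :
    ((incAux n l? B J).1.take (t + 1)).Subperm (B ++ J.take t) := by
  induction n generalizing l? B J t with
  | zero => simp [incAux]
  | succ n ih =>
    cases h : nextUp l? B with
    | none => simp [incAux, h]
    | some x =>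
      have hx := mem_of_nextUp_eq_some h
      simp only [incAux, h]
      cases t with
      | zero => simpa using hx
      | succ t =>
        have hperm :
            (B ++ J.take (t + 1)).Perm (x :: (B.erase x ++ J.take 1 ++ (J.drop 1).take t)) := by
          rw [Nat.add_comm, List.take_add, List.append_assoc]
          exact (List.perm_cons_erase hx).append_right _
        rw [List.take_succ_cons]
        exact ((List.subperm_cons x).mpr (ih _ _ _ t)).trans hperm.symm.subperm

theorem decAux_eq_incAux (n : ℕ) (l? : Option α) (B J : List α) :
    decAux n l? B J = incAux (α := αᵒᵈ) n l? B J := by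
  induction n generalizing l? B J with
  | zero => rfl
  | succ n ih =>
    have hnext : nextDown l? B = nextUp (α := αᵒᵈ) l? B := by cases l? <;> rfl
    simp only [decAux, incAux, hnext]
    split
    · rfl
    · rw [ih]; rfl

theorem maxDecRun_eq_maxIncRun (B J : List α) : maxDecRun B J = maxIncRun (α := αᵒᵈ) B J :=
  congrArg Prod.fst (decAux_eq_incAux _ _ _ _)

theorem take_maxIncRun_subperm (B J : List α) (t : ℕ) :
    ((maxIncRun B J).take (t + 1)).Subperm (B ++ J.take t) :=
  take_incAux_subperm _ _ _ _ t

theorem pairwise_maxIncRun {B J : List α} (hBJ : (B ++ J).Nodup) :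
    (maxIncRun B J).Pairwise (· < ·) := by
  have hnodup : (maxIncRun B J).Nodup := by
    obtain ⟨l, hl, hlBJ⟩ := take_maxIncRun_subperm B J (maxIncRun B J).length
    rw [List.take_of_length_le (Nat.le_succ _)] at hl
    exact hl.nodup_iff.mp (hlBJ.nodup (hBJ.sublist ((List.take_sublist _ _).append_left B)))
  exact ((isChain_incAux _ none B J).pairwise.and hnodup).imp fun h => lt_of_le_of_ne h.1 h.2

section TwoRuns

variable {B J r d : List α} {M : ℕ}

theorem getElem_lt_getElem_of_take_subset (hB : B.length ≤ M) (hr : r.Pairwise (· < ·))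
    (hd : d.Pairwise (· > ·)) (hrB : r.take (M + 1) ⊆ B ++ J.take M)
    (hdB : d.take (M + 1) ⊆ B ++ J.take M) (hrM : M < r.length) (hdM : M < d.length) :
    d[M] < r[M] := by
  by_contra! hle
  have hinter : (r.take (M + 1)).toFinset ∩ (d.take (M + 1)).toFinset ⊆ {r[M]} := by
    intro x hx
    simp only [Finset.mem_inter, List.mem_toFinset] at hx
    have hxr : x ≤ r[M] := List.le_getElem_of_mem_take hr hx.1 hrM
    have hdx : d[M] ≤ x := List.le_getElem_of_mem_take (α := αᵒᵈ) hd hx.2 hdM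
    exact Finset.mem_singleton.mpr (le_antisymm hxr (hle.trans hdx))
  have hcount := Finset.card_add_card_le_card_add_card_inter
    (List.toFinset_subset_toFinset hrB) (List.toFinset_subset_toFinset hdB)
  rw [List.card_toFinset_take hr.nodup hrM, List.card_toFinset_take hd.nodup hdM] at hcount
  have hshared := (Finset.card_le_card hinter).trans_eq (Finset.card_singleton _)
  have hK := card_toFinset_append_take_le hB J M
  omega

theorem mem_append_take_of_mem_of_mem (hB : B.length ≤ M) (hr : r.Pairwise (· < ·))
    (hd : d.Pairwise (· > ·)) (hrB : ∀ t, r.take (t + 1) ⊆ B ++ J.take t)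
    (hdB : ∀ t, d.take (t + 1) ⊆ B ++ J.take t) {x : α} (hxr : x ∈ r) (hxd : x ∈ d) :
    x ∈ B ++ J.take M := by
  by_contra hx
  obtain ⟨t, ht, rfl⟩ := List.getElem_of_mem hxr
  obtain ⟨t', ht', hdt'⟩ := List.getElem_of_mem hxd
  have hMt := lt_of_getElem_notMem (hrB t) ht hx
  have hMt' := lt_of_getElem_notMem (hdB t') ht' (hdt' ▸ hx)
  have hcross := getElem_lt_getElem_of_take_subset hB hr hd (hrB M) (hdB M) (by omega) (by omega)
  have hrise : r[M] < r[t] := List.pairwise_iff_getElem.mp hr _ _ _ _ hMt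
  have hfall : d[t'] < d[M] := List.pairwise_iff_getElem.mp hd _ _ _ _ hMt'
  exact lt_asymm hcross (hrise.trans (hdt' ▸ hfall))

theorem length_lt_or_length_lt (hM : 0 < M) (hB : B.length ≤ M) (hr : r.Pairwise (· < ·))
    (hd : d.Pairwise (· > ·)) (hrB : ∀ t, r.take (t + 1) ⊆ B ++ J.take t)
    (hdB : ∀ t, d.take (t + 1) ⊆ B ++ J.take t) : r.length < 3 * M ∨ d.length < 3 * M := by
  by_contra! hlong
  obtain ⟨k, hk⟩ : ∃ k, 3 * M = k + 1 := ⟨3 * M - 1, by omega⟩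
  have hcount := Finset.card_add_card_le_card_add_card_inter
    (List.toFinset_subset_toFinset (hk ▸ hrB k)) (List.toFinset_subset_toFinset (hk ▸ hdB k))
  have hinter : (r.take (3 * M)).toFinset ∩ (d.take (3 * M)).toFinset ⊆
      (B ++ J.take M).toFinset := by
    intro x hx
    simp only [Finset.mem_inter, List.mem_toFinset] at hx ⊢
    exact mem_append_take_of_mem_of_mem hB hr hd hrB hdB
      (List.mem_of_mem_take hx.1) (List.mem_of_mem_take hx.2)
  rw [List.card_toFinset_take hr.nodup hlong.1,
    List.card_toFinset_take hd.nodup hlong.2] at hcount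
  have hshared := Finset.card_le_card hinter
  have hK := card_toFinset_append_take_le hB J M
  have hU := card_toFinset_append_take_le hB J k
  omega

end TwoRuns

end RunGen

open RunGen

/-- For an input `I` with pairwise distinct elements and buffer size `M`, letting `r₁` and
`r₂` be the maximal increasing and maximal decreasing runs from the initial state (first
`M` elements buffered, rest remaining), we have `|r₁| < 3M` or `|r₂| < 3M`. -/
theorem stmt_10 {α : Type*} [LinearOrder α] (M : ℕ) (hM : 0 < M) (I : List α)
    (hI : I.Nodup) :
    (maxIncRun (I.take M) (I.drop M)).length < 3 * M ∨
    (maxDecRun (I.take M) (I.drop M)).length < 3 * M := by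
  have hBJ : (I.take M ++ I.drop M).Nodup := by rwa [List.take_append_drop]
  rw [maxDecRun_eq_maxIncRun]
  exact length_lt_or_length_lt hM (List.length_take_le M I) (pairwise_maxIncRun hBJ)
    (pairwise_maxIncRun (α := αᵒᵈ) hBJ) (fun t => (take_maxIncRun_subperm _ _ t).subset)
    (fun t => (take_maxIncRun_subperm (α := αᵒᵈ) _ _ t).subset)
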